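/- If k ⊂ K ⊂ L and k ⊂ M are subfields of a field N, and L and M are linearly disjoint over k, then the compositum (K,M) intersected with L equals K. -/

import Mathlib

/-! Write `x ∈ (K, M) ∩ L` as `p / q` with `p, q` in the `K`-span of `M`, and expand `p` and `q`
over a finite `k`-linearly independent family `m` in `M`: `p = ∑ uⱼ mⱼ`, `q = ∑ vⱼ mⱼ` with
`uⱼ, vⱼ ∈ K`. Linear disjointness says exactly that `m` stays linearly independent over `L`, so
comparing `L`-coefficients in `p = x q` gives `uⱼ = x vⱼ`; choosing `vⱼ ≠ 0` yields
`x = uⱼ / vⱼ ∈ K`. -/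

/-- `L` and `M` are linearly disjoint over `k` inside `N`: any `k`-linearly
independent family in `L` and any `k`-linearly independent family in `M` have
pairwise products linearly independent over `k`. -/
def LinDisjointOver {N : Type*} [Field N] (k L M : Subfield N) : Prop :=
  ∀ (ι κ : Type) (a : ι → N) (b : κ → N),
    (∀ i, a i ∈ L) → (∀ j, b j ∈ M) →
    LinearIndependent k a → LinearIndependent k b →
    LinearIndependent k (fun p : ι × κ => a p.1 * b p.2)

open Submodule

section

variable {N : Type*} [Field N]

namespace Subfield

theorem span_subset_span_of_le {k K : Subfield N} (hkK : k ≤ K) (s : Set N) :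
    (span k s : Set N) ⊆ span K s := by
  let V : Submodule k N :=
    { carrier := span K s
      add_mem' := add_mem
      zero_mem' := zero_mem _
      smul_mem' := fun c _ hy => (span K s).smul_mem ⟨c, hkK c.2⟩ hy }
  exact span_le (p := V) |>.mpr subset_span

theorem exists_eq_div_of_mem_sup {K M : Subfield N} {x : N} (hx : x ∈ K ⊔ M) :
    ∃ p ∈ span K (M : Set N), ∃ q ∈ span K (M : Set N), p / q = x := by
  rw [← K.closure_eq, ← M.closure_eq, ← closure_union, mem_closure_iff] at hx
  have hle : Subring.closure ((K : Set N) ∪ M) ≤ (Algebra.adjoin K (M : Set N)).toSubring :=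
    Subring.closure_le.mpr <| Set.union_subset
      (fun y hy => Subalgebra.algebraMap_mem _ (⟨y, hy⟩ : K)) Algebra.subset_adjoin
  have hspan : ∀ y ∈ Subring.closure ((K : Set N) ∪ M), y ∈ span K (M : Set N) := fun y hy => by
    have hM : Submonoid.closure (M : Set N) = M.toSubmonoid := M.toSubmonoid.closure_eq
    have hy := hle hy
    rwa [Subalgebra.mem_toSubring, ← Subalgebra.mem_toSubmodule, Algebra.adjoin_eq_span, hM] at hy
  obtain ⟨p, hp, q, hq, hpq⟩ := hx
  exact ⟨p, hspan p hp, q, hspan q hq, hpq⟩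

theorem exists_linearIndependent_of_forall_mem_span {k K : Subfield N} (hkK : k ≤ K)
    {S : Set N} {ι : Type} [Finite ι] {x : ι → N} (hx : ∀ i, x i ∈ span K S) :
    ∃ (κ : Type) (_ : Fintype κ) (m : κ → N), (∀ j, m j ∈ S) ∧ LinearIndependent k m ∧
      ∀ i, x i ∈ span K (Set.range m) := by
  choose n c v hv using fun i => mem_span_set'.mp (hx i)
  let w : (Σ i, Fin (n i)) → N := fun ij => v ij.1 ij.2
  obtain ⟨κ, sel, hsel, hspan, hli⟩ := exists_linearIndependent' k w
  have : Finite κ := Finite.of_injective sel hsel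
  refine ⟨κ, Fintype.ofFinite κ, w ∘ sel, fun j => (v _ _).2, hli, fun i => ?_⟩
  rw [← hv i]
  refine sum_mem fun j _ => smul_mem _ _ (span_subset_span_of_le hkK _ ?_)
  rw [hspan]
  exact subset_span ⟨⟨i, j⟩, rfl⟩

theorem div_mem_of_linearIndependent {K L : Subfield N} (hKL : K ≤ L) {κ : Type*} [Fintype κ]
    {m : κ → N} (hm : LinearIndependent L m) {p q : N} (hp : p ∈ span K (Set.range m))
    (hq : q ∈ span K (Set.range m)) (hq0 : q ≠ 0) (hpqL : p / q ∈ L) : p / q ∈ K := by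
  obtain ⟨u, hu⟩ := (mem_span_range_iff_exists_fun K).mp hp
  obtain ⟨v, hv⟩ := (mem_span_range_iff_exists_fun K).mp hq
  have hcoef : ∀ j, (u j : N) = p / q * v j := by
    have heq : ∑ j, (⟨u j, hKL (u j).2⟩ : L) • m j =
        ∑ j, (⟨p / q * v j, mul_mem hpqL (hKL (v j).2)⟩ : L) • m j := by
      simp only [Subfield.smul_def, smul_eq_mul] at hu hv ⊢
      simp only [mul_assoc, ← Finset.mul_sum, hu, hv, div_mul_cancel₀ p hq0]
    exact fun j => congrArg Subtype.val (Fintype.linearIndependent_iffₛ.mp hm _ _ heq j)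
  obtain ⟨j, hj⟩ : ∃ j, v j ≠ 0 := by
    by_contra! h
    simp [← hv, h] at hq0
  rw [← div_eq_of_eq_mul (by simpa using hj) (hcoef j)]
  exact div_mem (u j).2 (v j).2

end Subfield

theorem LinDisjointOver.linearIndependent {k L M : Subfield N} (h : LinDisjointOver k L M)
    {ι : Type} {m : ι → N} (hmM : ∀ i, m i ∈ M) (hm : LinearIndependent k m) :
    LinearIndependent L m := by
  rw [linearIndependent_iff_finset_linearIndependent] at hm ⊢
  intro s
  rw [Fintype.linearIndependent_iff]
  intro g hg i
  let a : s → N := fun i => g i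
  obtain ⟨κ, sel, hsel, hspan, hli⟩ := exists_linearIndependent' k a
  have : Finite κ := Finite.of_injective sel hsel
  let := Fintype.ofFinite κ
  have hmem : ∀ i, a i ∈ span k (Set.range (a ∘ sel)) := fun i =>
    hspan ▸ subset_span ⟨i, rfl⟩
  choose t ht using fun i => (mem_span_range_iff_exists_fun k).mp (hmem i)
  -- Expanding each `g i` over the `k`-independent subfamily `a ∘ sel` turns `∑ gᵢ mᵢ = 0`
  -- into a `k`-linear relation among the products `(a ∘ sel) j * m i`.
  have hprod := h κ s (a ∘ sel) (m ∘ Subtype.val) (fun j => (g _).2) (fun i => hmM i) hli (hm s)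
  have ht0 := Fintype.linearIndependent_iff.mp hprod (fun p => t p.2 p.1) <| calc
    ∑ p : κ × s, t p.2 p.1 • ((a ∘ sel) p.1 * m p.2)
        = ∑ i : s, (∑ j, t i j • (a ∘ sel) j) * m i := by
          simp only [Fintype.sum_prod_type, Finset.sum_mul, smul_mul_assoc]
          exact Finset.sum_comm
      _ = ∑ i : s, g i • m i := Finset.sum_congr rfl fun i _ => by rw [ht]; rfl
      _ = 0 := hg
  have hai : a i = 0 := by
    rw [← ht i]
    simp [fun j => ht0 (j, i)]
  exact Subtype.ext hai

end

theorem stmt_8_general {N : Type*} [Field N] (k K L M : Subfield N)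
    (hkK : k ≤ K) (hKL : K ≤ L)
    (hdisj : LinDisjointOver k L M) :
    (K ⊔ M) ⊓ L = K := by
  refine le_antisymm ?_ (le_inf le_sup_left hKL)
  rintro x ⟨hxKM, hxL⟩
  obtain ⟨p, hp, q, hq, rfl⟩ := Subfield.exists_eq_div_of_mem_sup hxKM
  rcases eq_or_ne q 0 with rfl | hq0
  · simp
  obtain ⟨κ, _, m, hmM, hmk, hpq⟩ := Subfield.exists_linearIndependent_of_forall_mem_span hkK
    (x := ![p, q]) (Fin.forall_fin_two.mpr ⟨hp, hq⟩)
  exact Subfield.div_mem_of_linearIndependent hKL (hdisj.linearIndependent hmM hmk)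
    (hpq 0) (hpq 1) hq0 hxL

/-- If `k ⊆ K ⊆ L` and `k ⊆ M` are subfields of a field `N`, and `L` and `M` are
linearly disjoint over `k`, then the compositum `(K, M)` intersected with `L`
equals `K`. -/
theorem stmt_8 {N : Type*} [Field N] (k K L M : Subfield N)
    (hkK : k ≤ K) (hKL : K ≤ L) (hkM : k ≤ M)
    (hdisj : LinDisjointOver k L M) :
    (K ⊔ M) ⊓ L = K :=
  stmt_8_general k K L M hkK hKL hdisj
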